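/- arXiv:1301.7292 — 3 statements merged into one kernel-verified Lean document; each statement's English description precedes it below -/
import Mathlib

section
/- For any n ≤ d^2, the set of tuples (φ_1, ..., φ_n) of vectors in ℂ^d for which the family of outer products {φ_iφ_i*}_{i=1}^n is linearly independent over ℝ in the space of d×d Hermitian matrices is open and dense in (ℂ^d)^n. -/
/-! Openness: linear independence is an open condition and `outer` is continuous.
Density, by induction on the number of vectors: given independent `outer ψ₁, …, outer ψₖ`
with `k < d²`, their real span `W` misses some `outer y`, because the outer products span all
matrices over `ℂ` (polarization), and an `ℝ`-subspace whose `ℂ`-span is this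
`d²`-dimensional space has real dimension at least `d²`. Then every ball around any `x`
contains a `v` with `outer v ∉ W`: of `x`, `x + c • y`, `x - c • y` one must work, since
`outer (x + c • y) + outer (x - c • y) - 2 • outer x = 2 ‖c‖² • outer y`. -/

/-- The outer product `x x*` of a vector `x ∈ ℂ^d` with itself:
the `d × d` matrix whose `(j,k)` entry is `x j * conj (x k)`. -/
def outer {d : ℕ} (x : EuclideanSpace ℂ (Fin d)) : Matrix (Fin d) (Fin d) ℂ :=
  Matrix.of fun j k => x j * starRingEnd ℂ (x k)

open Module Submodule Complex

lemma dense_of_dense_fibers {X Y : Type*} [TopologicalSpace X] [TopologicalSpace Y]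
    {A : Set X} (hA : Dense A) {S : Set (X × Y)} (hS : ∀ a ∈ A, Dense {b | (a, b) ∈ S}) :
    Dense S := by
  refine dense_iff_inter_open.2 fun U hU ⟨p, hp⟩ => ?_
  obtain ⟨u, v, hu, hv, hpu, hpv, huv⟩ := isOpen_prod_iff.1 hU p.1 p.2 hp
  obtain ⟨a, hau, haA⟩ := hA.inter_open_nonempty u hu ⟨_, hpu⟩
  obtain ⟨b, hbv, hbS⟩ := (hS a haA).inter_open_nonempty v hv ⟨_, hpv⟩
  exact ⟨(a, b), huv ⟨hau, hbv⟩, hbS⟩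

lemma finrank_le_finrank_of_span_eq_top {k K V : Type*} [Field k] [Field K] [Algebra k K]
    [AddCommGroup V] [Module K V] [Module k V] [IsScalarTower k K V]
    (W : Submodule k V) [FiniteDimensional k W] (hW : span K (W : Set V) = ⊤) :
    finrank K V ≤ finrank k W := by
  classical
  let b := finBasis k W
  have hspan : span K (Set.range (W.subtype ∘ b)) = ⊤ := by
    refine eq_top_iff.2 (hW ▸ span_le.2 fun w hw => ?_)
    have hw' : w ∈ span k (Set.range (W.subtype ∘ b)) := by
      rw [Set.range_comp, ← Submodule.map_span, b.span_eq, Submodule.map_top, range_subtype]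
      exact hw
    exact span_le_restrictScalars k K _ hw'
  calc finrank K V = finrank K (⊤ : Submodule K V) := finrank_top K V |>.symm
    _ = (Set.range (W.subtype ∘ b)).finrank K := by rw [Set.finrank, hspan]
    _ ≤ Fintype.card (Fin (finrank k W)) := finrank_range_le_card _
    _ = finrank k W := Fintype.card_fin _

variable {d : ℕ}

lemma outer_polarization (x y : EuclideanSpace ℂ (Fin d)) :
    (4 : ℂ) • Matrix.vecMulVec ⇑x (star ⇑y) =
      outer (x + y) - outer (x - y) + I • (outer (x + I • y) - outer (x - I • y)) := by
  ext a b
  simp only [outer, Matrix.vecMulVec_apply, Matrix.add_apply, Matrix.sub_apply, Matrix.smul_apply,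
    Matrix.of_apply, PiLp.add_apply, PiLp.sub_apply, PiLp.smul_apply, Pi.star_apply, smul_eq_mul,
    map_add, map_sub, map_mul, conj_I, Complex.star_def]
  ring_nf
  rw [I_sq]
  ring

lemma vecMulVec_mem_span_range_outer (x y : EuclideanSpace ℂ (Fin d)) :
    Matrix.vecMulVec ⇑x (star ⇑y) ∈ span ℂ (Set.range (outer (d := d))) := by
  have hmem : ∀ z, outer z ∈ span ℂ (Set.range (outer (d := d))) :=
    fun z => subset_span ⟨z, rfl⟩
  rw [← smul_mem_iff _ (by norm_num : (4 : ℂ) ≠ 0), outer_polarization]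
  exact add_mem (sub_mem (hmem _) (hmem _)) (smul_mem _ _ (sub_mem (hmem _) (hmem _)))

lemma span_range_outer : span ℂ (Set.range (outer (d := d))) = ⊤ := by
  refine eq_top_iff.2 fun A _ => ?_
  rw [Matrix.matrix_eq_sum_single A]
  refine sum_mem fun j _ => sum_mem fun k _ => ?_
  have h := vecMulVec_mem_span_range_outer (EuclideanSpace.single j 1) (EuclideanSpace.single k 1)
  rw [← mul_one (A j k), ← smul_eq_mul, ← Matrix.smul_single]
  refine smul_mem _ _ ?_
  simpa [Matrix.single_eq_single_vecMulVec_single] using h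

lemma outer_add_add_outer_sub (x y : EuclideanSpace ℂ (Fin d)) (c : ℂ) :
    outer (x + c • y) + outer (x - c • y) = (2 : ℝ) • outer x + (2 * ‖c‖ ^ 2 : ℝ) • outer y := by
  ext a b
  simp only [outer, Matrix.add_apply, Matrix.smul_apply, Matrix.of_apply, PiLp.add_apply,
    PiLp.sub_apply, PiLp.smul_apply, smul_eq_mul, map_add, map_sub, map_mul, real_smul]
  push_cast
  rw [← mul_conj']
  ring

lemma outer_mem_of_outer_add_smul_mem {W : Submodule ℝ (Matrix (Fin d) (Fin d) ℂ)}
    {x y : EuclideanSpace ℂ (Fin d)} {c : ℂ} (hc : c ≠ 0) (h₀ : outer x ∈ W)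
    (hadd : outer (x + c • y) ∈ W) (hsub : outer (x - c • y) ∈ W) : outer y ∈ W := by
  have h : (2 * ‖c‖ ^ 2 : ℝ) • outer y ∈ W := by
    rw [← add_sub_cancel_left ((2 : ℝ) • outer x) ((2 * ‖c‖ ^ 2 : ℝ) • outer y),
      ← outer_add_add_outer_sub]
    exact sub_mem (add_mem hadd hsub) (smul_mem _ _ h₀)
  exact (smul_mem_iff _ (by positivity)).1 h

lemma exists_outer_notMem_of_finrank_lt (W : Submodule ℝ (Matrix (Fin d) (Fin d) ℂ))
    (hW : finrank ℝ W < d ^ 2) : ∃ y, outer y ∉ W := by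
  by_contra! h
  have hspan : span ℂ (W : Set (Matrix (Fin d) (Fin d) ℂ)) = ⊤ :=
    eq_top_iff.2 (span_range_outer.ge.trans (span_mono (Set.range_subset_iff.2 h)))
  have := finrank_le_finrank_of_span_eq_top W hspan
  rw [finrank_matrix, finrank_self, Fintype.card_fin] at this
  nlinarith

lemma dense_setOf_outer_notMem {W : Submodule ℝ (Matrix (Fin d) (Fin d) ℂ)}
    {y : EuclideanSpace ℂ (Fin d)} (hy : outer y ∉ W) : Dense {v | outer v ∉ W} := by
  refine Metric.dense_iff.2 fun x r hr => ?_
  by_contra hempty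
  have hW : ∀ v ∈ Metric.ball x r, outer v ∈ W := fun v hv =>
    by_contra fun hv' => hempty ⟨v, hv, hv'⟩
  have hy₀ : y ≠ 0 := by
    rintro rfl
    exact hy (by convert W.zero_mem; ext; simp [outer])
  set c : ℂ := ((r / (2 * ‖y‖) : ℝ) : ℂ)
  have hcy : ‖c • y‖ < r := by
    rw [norm_smul, norm_real, Real.norm_of_nonneg (by positivity), div_mul_eq_mul_div,
      mul_div_mul_right _ _ (norm_ne_zero_iff.2 hy₀)]
    linarith
  refine hy (outer_mem_of_outer_add_smul_mem (c := c) ?_ (hW x (Metric.mem_ball_self hr)) ?_ ?_)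
  · rw [ne_eq, ofReal_eq_zero]
    positivity
  · exact hW _ (by rwa [Metric.mem_ball, dist_eq_norm, add_sub_cancel_left])
  · exact hW _ (by rwa [Metric.mem_ball, dist_eq_norm, sub_sub_cancel_left, norm_neg])

lemma dense_setOf_linearIndependent_outer {k : ℕ} (hk : k ≤ d ^ 2) :
    Dense {φ : Fin k → EuclideanSpace ℂ (Fin d) | LinearIndependent ℝ (fun i => outer (φ i))} := by
  induction k with
  | zero =>
    convert dense_univ
    exact Set.eq_univ_of_forall fun _ => linearIndependent_empty_type
  | succ k ih =>
    let S : Set ((Fin k → EuclideanSpace ℂ (Fin d)) × EuclideanSpace ℂ (Fin d)) :=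
      {p | LinearIndependent ℝ (fun i => outer (p.1 i)) ∧
        outer p.2 ∉ span ℝ (Set.range fun i => outer (p.1 i))}
    have hS : Dense S := by
      refine dense_of_dense_fibers (ih (by omega)) fun ψ hψ => ?_
      have hlt : finrank ℝ (span ℝ (Set.range fun i => outer (ψ i))) < d ^ 2 :=
        (finrank_range_le_card _).trans_lt (by rw [Fintype.card_fin]; omega)
      obtain ⟨y, hy⟩ := exists_outer_notMem_of_finrank_lt _ hlt
      exact (dense_setOf_outer_notMem hy).mono fun v hv => ⟨hψ, hv⟩
    have hsurj : Function.Surjective fun p : (Fin k → EuclideanSpace ℂ (Fin d)) × _ =>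
        (Fin.snoc p.1 p.2 : Fin (k + 1) → _) :=
      fun φ => ⟨(Fin.init φ, φ (Fin.last k)), Fin.snoc_init_self φ⟩
    refine (hsurj.denseRange.dense_image
      (continuous_fst.finSnoc (A := fun _ => EuclideanSpace ℂ (Fin d)) continuous_snd) hS).mono ?_
    rintro _ ⟨⟨ψ, v⟩, ⟨hψ, hv⟩, rfl⟩
    simpa only [Set.mem_ofPred_eq, ← Function.comp_apply (f := outer), Fin.comp_snoc]
      using hψ.finSnoc hv

lemma continuous_outer : Continuous (outer (d := d)) := by
  unfold outer
  fun_prop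

open scoped Matrix.Norms.Elementwise in
lemma isOpen_setOf_linearIndependent_outer (k : ℕ) :
    IsOpen {φ : Fin k → EuclideanSpace ℂ (Fin d) | LinearIndependent ℝ (fun i => outer (φ i))} :=
  isOpen_setOfPred_linearIndependent.preimage (continuous_pi fun i =>
    continuous_outer.comp (continuous_apply i))

/-- For `n ≤ d²`, the set of `n`-tuples of vectors in `ℂ^d` whose outer products are
linearly independent over `ℝ` (in the space of `d × d` Hermitian matrices)
is open and dense. -/
theorem stmt2 (d n : ℕ) (hn : n ≤ d ^ 2) :
    IsOpen {φ : Fin n → EuclideanSpace ℂ (Fin d) |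
        LinearIndependent ℝ (fun i => outer (φ i))} ∧
    Dense {φ : Fin n → EuclideanSpace ℂ (Fin d) |
        LinearIndependent ℝ (fun i => outer (φ i))} :=
  ⟨isOpen_setOf_linearIndependent_outer n, dense_setOf_linearIndependent_outer hn⟩
end

section
/- Let φ_1, ..., φ_n be unit norm vectors in ℂ^d with d ≥ 1, and let P = {w ∈ ℝ^n : w_i ≥ 0 for all i, and Σ_{i=1}^n w_i φ_iφ_i* = (1/d)·I_d}. Then P is a compact convex subset of ℝ^n and P equals the convex hull of the set M of its elements w for which no proper subset of {φ_i : w_i > 0} is scalable; in particular every element of P is a convex combination of such minimal elements. -/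
open Finset

lemma exists_add_smul_sub_nonneg_support_ssubset {ι : Type*} [Fintype ι] {w u : ι → ℝ}
    (hw : ∀ i, 0 ≤ w i) (hu : ∀ i, 0 ≤ u i) (hsupp : {i | 0 < u i} ⊆ {i | 0 < w i})
    (hlt : ∃ i, w i < u i) :
    ∃ t : ℝ, 0 ≤ t ∧ (∀ i, 0 ≤ (w + t • (w - u)) i) ∧
      {i | 0 < (w + t • (w - u)) i} ⊂ {i | 0 < w i} := by
  classical
  -- the largest admissible step is `t = min {w i / (u i - w i) | w i < u i}`
  obtain ⟨j, hjT, hj⟩ := (univ.filter fun i => w i < u i).exists_min_image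
    (fun i => w i / (u i - w i)) (by simpa [Finset.Nonempty] using hlt)
  have hjlt : w j < u j := (mem_filter.1 hjT).2
  set t := w j / (u j - w j)
  have ht : 0 ≤ t := div_nonneg (hw j) (sub_pos.2 hjlt).le
  simp only [Pi.add_apply, Pi.smul_apply, Pi.sub_apply, smul_eq_mul]
  refine ⟨t, ht, fun i => ?_, Set.ssubset_iff_exists.2 ⟨fun i hi => ?_, j, ?_, ?_⟩⟩
  · by_cases hi : w i < u i
    · have := (le_div_iff₀ (sub_pos.2 hi)).1 (hj i (by simpa using hi))
      nlinarith
    · nlinarith [mul_nonneg ht (sub_nonneg.2 (not_lt.1 hi)), hw i]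
  · by_contra hwi
    have hwi : w i = 0 := le_antisymm (not_lt.1 hwi) (hw i)
    have hui : u i = 0 := le_antisymm (not_lt.1 fun h => hwi.not_gt (hsupp h)) (hu i)
    simp [hwi, hui] at hi
  · exact hsupp ((hw j).trans_lt hjlt)
  · have hne : u j - w j ≠ 0 := (sub_pos.2 hjlt).ne'
    have hzero : w j + t * (w j - u j) = 0 := by
      simp only [t]
      field_simp
      ring
    simp [hzero]

section NonnegSolutions

variable {ι E : Type*} [AddCommGroup E] [Module ℝ E]

def IsScalable (A : ι → E) (B : E) (I : Finset ι) : Prop :=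
  ∃ v : ι → ℝ, (∀ i, 0 ≤ v i) ∧ ∑ i ∈ I, v i • A i = B

lemma IsScalable.smul {A : ι → E} {B : E} {I : Finset ι} (h : IsScalable A B I) {c : ℝ}
    (hc : 0 ≤ c) : IsScalable A (c • B) I := by
  obtain ⟨v, hv, hvB⟩ := h
  refine ⟨c • v, fun i => mul_nonneg hc (hv i), ?_⟩
  simp only [Pi.smul_apply, smul_eq_mul, mul_smul, ← Finset.smul_sum, hvB]

lemma isScalable_smul_iff {A : ι → E} {B : E} {I : Finset ι} {c : ℝ} (hc : 0 < c) :
    IsScalable A (c • B) I ↔ IsScalable A B I :=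
  ⟨fun h => by simpa [smul_smul, hc.ne'] using h.smul (inv_nonneg.2 hc.le),
    fun h => h.smul hc.le⟩

variable [Fintype ι]

def nonnegSolutions (A : ι → E) (B : E) : Set (ι → ℝ) :=
  {w | (∀ i, 0 ≤ w i) ∧ ∑ i, w i • A i = B}

variable {A : ι → E} {B : E}

lemma IsScalable.exists_mem_nonnegSolutions {I : Finset ι} (h : IsScalable A B I) :
    ∃ u ∈ nonnegSolutions A B, {i | 0 < u i} ⊆ I := by
  classical
  obtain ⟨v, hv, hvB⟩ := h
  refine ⟨fun i => if i ∈ I then v i else 0, ⟨fun i => ?_, ?_⟩, fun i hi => ?_⟩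
  · dsimp only
    split_ifs
    exacts [hv i, le_rfl]
  · simp only [ite_smul, zero_smul, sum_ite_mem, univ_inter, hvB]
  · by_contra hiI
    simp [Finset.mem_coe.not.1 hiI] at hi

variable (A B)

lemma convex_nonnegSolutions : Convex ℝ (nonnegSolutions A B) := by
  rintro w ⟨hw0, hw⟩ u ⟨hu0, hu⟩ a b ha hb hab
  simp only [nonnegSolutions, Set.mem_ofPred_eq, Pi.add_apply, Pi.smul_apply, smul_eq_mul]
  refine ⟨fun i => by have := hw0 i; have := hu0 i; positivity, ?_⟩
  simp only [add_smul, mul_smul, sum_add_distrib, ← Finset.smul_sum, hw, hu]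
  rw [← add_smul, hab, one_smul]

lemma isClosed_nonnegSolutions [TopologicalSpace E] [ContinuousAdd E] [ContinuousSMul ℝ E]
    [T2Space E] : IsClosed (nonnegSolutions A B) :=
  (isClosed_Ici (a := (0 : ι → ℝ))).inter <|
    isClosed_eq (continuous_finsetSum _ fun i _ => (continuous_apply i).smul continuous_const)
      continuous_const

variable {A B}

lemma isCompact_nonnegSolutions [TopologicalSpace E] [ContinuousAdd E] [ContinuousSMul ℝ E]
    [T2Space E] (h : nonnegSolutions A B ⊆ stdSimplex ℝ ι) : IsCompact (nonnegSolutions A B) :=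
  (isCompact_stdSimplex ℝ ι).of_isClosed_subset (isClosed_nonnegSolutions A B) h

def minimalNonnegSolutions (A : ι → E) (B : E) : Set (ι → ℝ) :=
  {w | w ∈ nonnegSolutions A B ∧
    ∀ I : Finset ι, (I : Set ι) ⊂ {i | 0 < w i} → ¬ IsScalable A B I}

lemma exists_mem_nonnegSolutions_mem_segment (hP : nonnegSolutions A B ⊆ stdSimplex ℝ ι)
    {w u : ι → ℝ} (hw : w ∈ nonnegSolutions A B) (hu : u ∈ nonnegSolutions A B)
    (hsupp : {i | 0 < u i} ⊂ {i | 0 < w i}) :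
    ∃ w' ∈ nonnegSolutions A B,
      {i | 0 < w' i} ⊂ {i | 0 < w i} ∧ w ∈ segment ℝ u w' := by
  have hlt : ∃ i, w i < u i := by
    by_contra! hle
    obtain ⟨j, hjw, hju⟩ := Set.exists_of_ssubset hsupp
    have := Finset.sum_lt_sum (fun i _ => hle i)
      ⟨j, mem_univ j, (le_of_not_gt hju).trans_lt hjw⟩
    rw [(hP hu).2, (hP hw).2] at this
    exact lt_irrefl _ this
  obtain ⟨t, ht, hnonneg, hssub⟩ :=
    exists_add_smul_sub_nonneg_support_ssubset hw.1 hu.1 hsupp.subset hlt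
  refine ⟨w + t • (w - u), ⟨hnonneg, ?_⟩, hssub, t / (1 + t), 1 / (1 + t), by positivity,
    by positivity, by field_simp; ring, ?_⟩
  · simp only [Pi.add_apply, Pi.smul_apply, Pi.sub_apply, smul_eq_mul, add_smul, mul_smul,
      sub_smul, sum_add_distrib, sum_sub_distrib, ← Finset.smul_sum, hw.2, hu.2, sub_self,
      smul_zero, add_zero]
  · funext i
    simp only [Pi.add_apply, Pi.smul_apply, Pi.sub_apply, smul_eq_mul]
    field_simp
    ring

theorem nonnegSolutions_subset_convexHull (hP : nonnegSolutions A B ⊆ stdSimplex ℝ ι) :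
    nonnegSolutions A B ⊆ convexHull ℝ (minimalNonnegSolutions A B) := by
  intro w hw
  induction hk : {i | 0 < w i}.ncard using Nat.strong_induction_on generalizing w with
  | _ k ih =>
  by_cases hmin : ∀ I : Finset ι, (I : Set ι) ⊂ {i | 0 < w i} → ¬ IsScalable A B I
  · exact subset_convexHull ℝ _ ⟨hw, hmin⟩
  push Not at hmin
  obtain ⟨I, hI, hscal⟩ := hmin
  obtain ⟨u, hu, huI⟩ := hscal.exists_mem_nonnegSolutions
  have hsupp : {i | 0 < u i} ⊂ {i | 0 < w i} := huI.trans_ssubset hI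
  obtain ⟨w', hw', hsupp', hseg⟩ := exists_mem_nonnegSolutions_mem_segment hP hw hu hsupp
  refine (convex_convexHull ℝ _).segment_subset ?_ ?_ hseg
  · exact ih _ (hk ▸ Set.ncard_lt_ncard hsupp) hu rfl
  · exact ih _ (hk ▸ Set.ncard_lt_ncard hsupp') hw' rfl

theorem nonnegSolutions_eq_convexHull (hP : nonnegSolutions A B ⊆ stdSimplex ℝ ι) :
    nonnegSolutions A B = convexHull ℝ (minimalNonnegSolutions A B) :=
  (nonnegSolutions_subset_convexHull hP).antisymm <|
    convexHull_min (fun _ hw => hw.1) (convex_nonnegSolutions A B)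

end NonnegSolutions

lemma trace_outer {d : ℕ} (x : EuclideanSpace ℂ (Fin d)) :
    (outer x).trace = ((‖x‖ ^ 2 : ℝ) : ℂ) := by
  simp [outer, Matrix.trace, Complex.mul_conj, Complex.normSq_eq_norm_sq,
    EuclideanSpace.norm_sq_eq]

lemma nonnegSolutions_outer_subset_stdSimplex {ι : Type*} [Fintype ι] {d : ℕ} (hd : 1 ≤ d)
    {φ : ι → EuclideanSpace ℂ (Fin d)} (hφ : ∀ i, ‖φ i‖ = 1) :
    nonnegSolutions (fun i => outer (φ i)) ((d : ℝ)⁻¹ • 1) ⊆ stdSimplex ℝ ι := by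
  rintro w ⟨hw0, hw⟩
  refine ⟨hw0, ?_⟩
  have hd' : (d : ℂ) ≠ 0 := Nat.cast_ne_zero.2 (by omega)
  have htrace := congrArg Matrix.trace hw
  simp only [Matrix.trace_sum, Matrix.trace_smul, trace_outer, hφ, Matrix.trace_one] at htrace
  rw [← Complex.ofReal_inj]
  simpa [inv_mul_cancel₀ hd'] using htrace

/-- Let `P = {w ∈ ℝ^n : w ≥ 0, Σ w_i φ_i φ_i* = (1/d) I_d}` for unit norm vectors
`φ_i ∈ ℂ^d`.  Then `P` is a compact convex subset of `ℝ^n`, and `P` is the convex hull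
of the set of its minimal elements, i.e. those `w ∈ P` for which no proper subset of
`{φ_i : w_i > 0}` is scalable. -/
theorem stmt12 {d n : ℕ} (hd : 1 ≤ d) (φ : Fin n → EuclideanSpace ℂ (Fin d))
    (hφ : ∀ i, ‖φ i‖ = 1) :
    IsCompact {w : Fin n → ℝ | (∀ i, 0 ≤ w i) ∧
        ∑ i, w i • outer (φ i) = (d : ℝ)⁻¹ • (1 : Matrix (Fin d) (Fin d) ℂ)} ∧
    Convex ℝ {w : Fin n → ℝ | (∀ i, 0 ≤ w i) ∧
        ∑ i, w i • outer (φ i) = (d : ℝ)⁻¹ • (1 : Matrix (Fin d) (Fin d) ℂ)} ∧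
    {w : Fin n → ℝ | (∀ i, 0 ≤ w i) ∧
        ∑ i, w i • outer (φ i) = (d : ℝ)⁻¹ • (1 : Matrix (Fin d) (Fin d) ℂ)} =
      convexHull ℝ
        {w : Fin n → ℝ |
          ((∀ i, 0 ≤ w i) ∧
            ∑ i, w i • outer (φ i) = (d : ℝ)⁻¹ • (1 : Matrix (Fin d) (Fin d) ℂ)) ∧
          ∀ I : Finset (Fin n), (I : Set (Fin n)) ⊂ {i | 0 < w i} →
            ¬ ∃ v : Fin n → ℝ, (∀ i, 0 ≤ v i) ∧
                ∑ i ∈ I, v i • outer (φ i) = (1 : Matrix (Fin d) (Fin d) ℂ)} := by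
  have hP := nonnegSolutions_outer_subset_stdSimplex hd hφ
  have hdecomp := nonnegSolutions_eq_convexHull hP
  simp only [minimalNonnegSolutions, isScalable_smul_iff (inv_pos.2 (Nat.cast_pos.2 hd))]
    at hdecomp
  exact ⟨isCompact_nonnegSolutions hP, convex_nonnegSolutions _ _, hdecomp⟩
end

section
/- Let φ_1, ..., φ_n be vectors in ℂ^d and let s ≥ 2 be an integer. If every subfamily {φ_i}_{i∈I} with |I| < s is linearly independent over ℂ, then every subfamily of outer products {φ_iφ_i*}_{i∈I} with |I| < 2s − 2 is linearly independent over ℝ in the space of d×d Hermitian matrices. Equivalently, if spark({φ_i}) ≥ s then spark({φ_iφ_i*}) ≥ 2s − 2. -/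
/-!
Suppose `∑ cᵢ φᵢφᵢ* = 0` with real `cᵢ`, and split the indices into `P = {cᵢ > 0}` and
`N = {cᵢ < 0}`. Evaluating the quadratic form at `x` gives `∑ cᵢ |⟨φᵢ, x⟩|² = 0`; for `x ⟂ φ_N`
every term is nonnegative, so each `φⱼ` with `j ∈ P` is orthogonal to `(span φ_N)ᗮ`, i.e. lies in
`span φ_N`. Hence if `|N| ≤ s - 2`, independence of the `< s` vectors `φ_{N ∪ {j}}` forces
`P = ∅`, and then the same argument with `-c` (whose negative set is now empty) forces `N = ∅`.
Since `|P| + |N| < 2s - 2`, one of `c`, `-c` has at most `s - 2` negative coefficients.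
-/

open Finset Matrix
open scoped ComplexInnerProductSpace

variable {d : ℕ} {ι : Type*}

lemma outer_eq_vecMulVec (y : EuclideanSpace ℂ (Fin d)) :
    outer y = vecMulVec y.ofLp (star y.ofLp) := rfl

lemma star_dotProduct_outer_mulVec (x y : EuclideanSpace ℂ (Fin d)) :
    star x.ofLp ⬝ᵥ (outer y *ᵥ x.ofLp) = ((‖⟪y, x⟫‖ ^ 2 : ℝ) : ℂ) := by
  have hinner : ⟪y, x⟫ = star y.ofLp ⬝ᵥ x.ofLp := by
    rw [EuclideanSpace.inner_eq_star_dotProduct, dotProduct_comm]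
  rw [outer_eq_vecMulVec, vecMulVec_mulVec, dotProduct_smul, op_smul_eq_mul, star_dotProduct,
    ← hinner]
  exact_mod_cast Complex.conj_mul' ⟪y, x⟫

section SumSmulOuter

variable {φ : ι → EuclideanSpace ℂ (Fin d)} {I : Finset ι} {c : ι → ℝ}

lemma sum_mul_norm_inner_sq_eq_zero (hsum : ∑ i ∈ I, c i • outer (φ i) = 0)
    (x : EuclideanSpace ℂ (Fin d)) :
    ∑ i ∈ I, c i * ‖⟪φ i, x⟫‖ ^ 2 = 0 := by
  have := congrArg (fun M => star x.ofLp ⬝ᵥ (M *ᵥ x.ofLp)) hsum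
  simp only [sum_mulVec, dotProduct_sum, smul_mulVec, dotProduct_smul,
    star_dotProduct_outer_mulVec, zero_mulVec, dotProduct_zero, Complex.real_smul] at this
  exact_mod_cast this

lemma mem_span_neg_of_sum_smul_outer_eq_zero (hsum : ∑ i ∈ I, c i • outer (φ i) = 0)
    {j : ι} (hj : j ∈ I) (hcj : 0 < c j) :
    φ j ∈ Submodule.span ℂ (φ '' ↑(I.filter (c · < 0))) := by
  set V := Submodule.span ℂ (φ '' ↑(I.filter (c · < 0)))
  rw [← Submodule.orthogonal_orthogonal V, Submodule.mem_orthogonal]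
  intro x hx
  have hterm_nonneg : ∀ i ∈ I, 0 ≤ c i * ‖⟪φ i, x⟫‖ ^ 2 := by
    intro i hi
    rcases lt_or_ge (c i) 0 with hci | hci
    · have hφi : φ i ∈ V := Submodule.subset_span ⟨i, mem_filter.mpr ⟨hi, hci⟩, rfl⟩
      simp [Submodule.inner_right_of_mem_orthogonal hφi hx]
    · positivity
  have hj0 := (sum_eq_zero_iff_of_nonneg hterm_nonneg).mp
    (sum_mul_norm_inner_sq_eq_zero hsum x) j hj
  rw [mul_eq_zero, or_iff_right hcj.ne', sq_eq_zero_iff, norm_eq_zero] at hj0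
  exact inner_eq_zero_symm.mp hj0

variable {s : ℕ} (hspark : ∀ J : Finset ι, #J < s → LinearIndepOn ℂ φ J)
include hspark

lemma nonpos_of_sum_smul_outer_eq_zero (hsum : ∑ i ∈ I, c i • outer (φ i) = 0)
    (hneg : #(I.filter (c · < 0)) + 1 < s) : ∀ j ∈ I, c j ≤ 0 := by
  classical
  intro j hj
  by_contra! hcj
  have hjN : j ∉ I.filter (c · < 0) := fun h => (mem_filter.mp h).2.not_gt hcj
  have hindep := hspark _ ((card_insert_of_notMem hjN).trans_lt hneg)
  rw [coe_insert, linearIndepOn_insert (mod_cast hjN)] at hindep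
  exact hindep.2 (mem_span_neg_of_sum_smul_outer_eq_zero hsum hj hcj)

lemma eq_zero_of_sum_smul_outer_eq_zero (hsum : ∑ i ∈ I, c i • outer (φ i) = 0)
    (hneg : #(I.filter (c · < 0)) + 1 < s) : ∀ j ∈ I, c j = 0 := by
  have hnonpos := nonpos_of_sum_smul_outer_eq_zero hspark hsum hneg
  have hsum' : ∑ i ∈ I, (-c) i • outer (φ i) = 0 := by
    simp [hsum]
  have hneg' : #(I.filter ((-c) · < 0)) + 1 < s := by
    rw [filter_false_of_mem fun i hi => by simpa using hnonpos i hi, card_empty]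
    omega
  have hnonneg := nonpos_of_sum_smul_outer_eq_zero hspark hsum' hneg'
  exact fun j hj => le_antisymm (hnonpos j hj) (by simpa using hnonneg j hj)

end SumSmulOuter

theorem stmt14_general {d n : ℕ} (s : ℕ) (φ : Fin n → EuclideanSpace ℂ (Fin d))
    (hspark : ∀ I : Finset (Fin n), I.card < s →
        LinearIndependent ℂ (fun i : I => φ i)) :
    ∀ I : Finset (Fin n), I.card < 2 * s - 2 →
      LinearIndependent ℝ (fun i : I => outer (φ i)) := by
  intro I hI
  refine linearIndepOn_finset_iff (v := fun i => outer (φ i)).mpr fun c hsum => ?_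
  have hsplit : #(I.filter (c · < 0)) + #(I.filter ((-c) · < 0)) ≤ #I := by
    rw [← card_filter_add_card_filter_not (s := I) (c · < 0)]
    gcongr with i
    exact fun hpos => (neg_lt_zero.mp hpos).not_gt
  rcases (by omega : #(I.filter (c · < 0)) + 1 < s ∨ #(I.filter ((-c) · < 0)) + 1 < s)
    with hneg | hneg
  · exact eq_zero_of_sum_smul_outer_eq_zero hspark hsum hneg
  · have hsum' : ∑ i ∈ I, (-c) i • outer (φ i) = 0 := by
      simp [hsum]
    simpa using eq_zero_of_sum_smul_outer_eq_zero hspark hsum' hneg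

/-- If `spark({φ_i}) ≥ s` (every subfamily of size `< s` is linearly independent over
`ℂ`), then `spark({φ_i φ_i*}) ≥ 2s - 2` (every subfamily of outer products of size
`< 2s - 2` is linearly independent over `ℝ`). -/
theorem stmt14 {d n : ℕ} (s : ℕ) (hs : 2 ≤ s) (φ : Fin n → EuclideanSpace ℂ (Fin d))
    (hspark : ∀ I : Finset (Fin n), I.card < s →
        LinearIndependent ℂ (fun i : I => φ i)) :
    ∀ I : Finset (Fin n), I.card < 2 * s - 2 →
      LinearIndependent ℝ (fun i : I => outer (φ i)) :=
  stmt14_general s φ hspark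
end
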